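/- Let K be a commutative ring with 1 and G a group. The subgroup V_*(KG) is normal in V(KG) if and only if all elements of the form xx* with x ∈ V(KG) are central in KG. -/

import Mathlib

open MonoidAlgebra

variable (K G : Type*) [CommRing K] [Group G]

/-- The augmentation homomorphism of the group algebra `K[G]`. -/
noncomputable def aug : MonoidAlgebra K G →* K :=
  ((MonoidAlgebra.lift K K G) 1 : MonoidAlgebra K G →ₐ[K] K).toMonoidHom

/-- The group `V(KG)` of normalized units of the group algebra `K[G]`. -/
noncomputable def V : Subgroup (MonoidAlgebra K G)ˣ :=
  (Units.map (aug K G)).ker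

/-- The canonical involutive anti-automorphism `a ↦ a*` of the group algebra,
obtained by extending `g ↦ g⁻¹` linearly. -/
noncomputable def gstar : MonoidAlgebra K G → MonoidAlgebra K G :=
  MonoidAlgebra.mapDomain (fun g : G => g⁻¹)

variable {K G}

lemma gstar_one : gstar K G 1 = 1 := by
  unfold gstar
  rw [MonoidAlgebra.one_def, MonoidAlgebra.mapDomain_single, inv_one]

lemma gstar_gstar (a : MonoidAlgebra K G) : gstar K G (gstar K G a) = a := by
  unfold gstar
  ext g
  simp [← Finsupp.mapDomain_comp, Function.comp]

lemma gstar_mul (a b : MonoidAlgebra K G) :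
    gstar K G (a * b) = gstar K G b * gstar K G a := by
  induction a using MonoidAlgebra.induction_linear with
  | zero => simp [gstar]
  | add f g hf hg =>
      simp [gstar, add_mul, mul_add, MonoidAlgebra.mapDomain_add] at hf hg ⊢
      rw [hf, hg]
  | single g c =>
    induction b using MonoidAlgebra.induction_linear with
    | zero => simp [gstar]
    | add f' g' hf hg =>
        simp [gstar, add_mul, mul_add, MonoidAlgebra.mapDomain_add] at hf hg ⊢
        rw [hf, hg]
    | single h d =>
      show gstar K G (MonoidAlgebra.single g c * MonoidAlgebra.single h d) = _
      rw [MonoidAlgebra.single_mul_single]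
      unfold gstar
      simp only [MonoidAlgebra.mapDomain_single, mul_inv_rev]
      rw [MonoidAlgebra.single_mul_single, mul_comm d c]

variable (K G)

/-- The subgroup of unitary units: units `u` with `u* = u⁻¹`. -/
noncomputable def unitaryUnits : Subgroup (MonoidAlgebra K G)ˣ where
  carrier := {u | gstar K G ↑u = ↑u⁻¹}
  one_mem' := by simpa using gstar_one
  mul_mem' := by
    intro u v hu hv
    show gstar K G ↑(u * v) = ↑(u * v)⁻¹
    rw [Units.val_mul, gstar_mul, hu, hv, mul_inv_rev, Units.val_mul]
  inv_mem' := by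
    intro u hu
    have hu' : gstar K G ↑u = ↑u⁻¹ := hu
    show gstar K G ↑u⁻¹ = ↑u⁻¹⁻¹
    rw [inv_inv, ← hu', gstar_gstar]

/-- The group `V_*(KG)` of unitary normalized units. -/
noncomputable def Vstar : Subgroup (MonoidAlgebra K G)ˣ :=
  V K G ⊓ unitaryUnits K G

/-- `x ∈ K[G]` is *unitary* if it is invertible with `x* = x⁻¹`,
equivalently `x ⬝ x* = x* ⬝ x = 1`. -/
def IsUnitaryElem (x : MonoidAlgebra K G) : Prop :=
  x * gstar K G x = 1 ∧ gstar K G x * x = 1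

/-- `ḡ`: the sum in `K[G]` of the distinct powers of `g`. -/
noncomputable def gbar (g : G) : MonoidAlgebra K G :=
  ∑ i ∈ Finset.range (orderOf g), (MonoidAlgebra.of K G g) ^ i

/-- The bicyclic unit `u_{g,h} = 1 + (g-1)hḡ`. -/
noncomputable def bicyclic (g h : G) : MonoidAlgebra K G :=
  1 + (MonoidAlgebra.of K G g - 1) * MonoidAlgebra.of K G h * gbar K G g

/-!
For a unitary `u` and any unit `x`, the conjugate `x u x⁻¹` is unitary iff `x* x` commutes with
`u`. So `V_*` is normal in `V` iff every `x* x` with `x ∈ V` commutes with all of `V_*`. The group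
elements lie in `V_*` and span `K[G]`, so then `x* x` is central, and `x x* = x (x* x) x⁻¹ = x* x`.
Conversely `x* x = y y*` for `y = x* ∈ V`.
-/

section StarGroup

variable {H : Type*} [Group H] [StarMul H]

theorem star_conj_eq_inv_iff_commute {u : H} (hu : star u = u⁻¹) (x : H) :
    star (x * u * x⁻¹) = (x * u * x⁻¹)⁻¹ ↔ Commute (star x * x) u := by
  calc star (x * u * x⁻¹) = (x * u * x⁻¹)⁻¹
      ↔ (star x)⁻¹ * (u⁻¹ * star x) = x * u⁻¹ * x⁻¹ := by
        simp only [star_mul, star_inv, hu, mul_inv_rev, inv_inv, mul_assoc]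
    _ ↔ u⁻¹ * (star x * x) = star x * x * u⁻¹ := by
        rw [inv_mul_eq_iff_eq_mul, ← mul_assoc, ← mul_assoc, eq_mul_inv_iff_mul_eq, mul_assoc]
    _ ↔ Commute (star x * x) u := by
        rw [← Commute.inv_right_iff, commute_iff_eq, eq_comm]

theorem Subgroup.subgroupOf_normal_iff_commute_star_mul_self {V N : Subgroup H}
    (hN : ∀ u, u ∈ N ↔ u ∈ V ∧ star u = u⁻¹) :
    (N.subgroupOf V).Normal ↔ ∀ x ∈ V, ∀ u ∈ N, Commute (star x * x) u := by
  constructor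
  · intro h x hx u hu
    have huN := (hN u).1 hu
    have hconj := h.conj_mem ⟨u, huN.1⟩ (Subgroup.mem_subgroupOf.2 hu) ⟨x, hx⟩
    rw [Subgroup.mem_subgroupOf, hN] at hconj
    exact (star_conj_eq_inv_iff_commute huN.2 x).1 hconj.2
  · refine fun h => ⟨fun u hu x => ?_⟩
    rw [Subgroup.mem_subgroupOf, hN] at hu ⊢
    exact ⟨(x * u * x⁻¹).2, (star_conj_eq_inv_iff_commute hu.2 x).2 (h x x.2 u ((hN u).2 hu))⟩

end StarGroup

namespace MonoidAlgebra

theorem commute_of_forall_commute_of {k M : Type*} [CommSemiring k] [Monoid M]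
    {c : MonoidAlgebra k M} (h : ∀ m, Commute c (of k M m)) (a : MonoidAlgebra k M) :
    Commute c a :=
  a.induction_on h (fun _ _ => Commute.add_right) (fun r _ h => h.smul_right r)

variable {K G : Type*} [CommRing K] [Group G]

noncomputable instance : StarRing (MonoidAlgebra K G) where
  star := gstar K G
  star_involutive := gstar_gstar
  star_mul := gstar_mul
  star_add _ _ := mapDomain_add _ _ _

theorem gstar_eq_star (a : MonoidAlgebra K G) : gstar K G a = star a := rfl

theorem star_single (g : G) (c : K) : star (single g c) = single g⁻¹ c :=
  mapDomain_single

theorem aug_single (g : G) (c : K) : aug K G (single g c) = c := by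
  simp [aug]

theorem aug_star (a : MonoidAlgebra K G) : aug K G (star a) = aug K G a := by
  change lift K K G 1 (star a) = lift K K G 1 a
  induction a using MonoidAlgebra.induction_linear with
  | zero => rw [star_zero]
  | add a b ha hb => rw [star_add, map_add, map_add, ha, hb]
  | single g c => simp only [star_single, lift_single, MonoidHom.one_apply]

theorem mem_V_iff (u : (MonoidAlgebra K G)ˣ) : u ∈ V K G ↔ aug K G u = 1 := by
  rw [V, MonoidHom.mem_ker, Units.ext_iff, Units.coe_map, Units.val_one]

theorem mem_unitaryUnits_iff (u : (MonoidAlgebra K G)ˣ) :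
    u ∈ unitaryUnits K G ↔ star u = u⁻¹ :=
  (Units.ext_iff (u := star u) (v := u⁻¹)).symm

theorem mem_Vstar_iff (u : (MonoidAlgebra K G)ˣ) :
    u ∈ Vstar K G ↔ u ∈ V K G ∧ star u = u⁻¹ := by
  rw [Vstar, Subgroup.mem_inf, mem_unitaryUnits_iff]

theorem star_mem_V {x : (MonoidAlgebra K G)ˣ} (hx : x ∈ V K G) : star x ∈ V K G := by
  rwa [mem_V_iff, Units.coe_star, aug_star, ← mem_V_iff]

theorem toHomUnits_of_mem_Vstar (g : G) : (of K G).toHomUnits g ∈ Vstar K G := by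
  refine (mem_Vstar_iff _).2 ⟨?_, Units.ext ?_⟩
  · rw [mem_V_iff, MonoidHom.coe_toHomUnits, of_apply, aug_single]
  · rw [Units.coe_star, ← map_inv, MonoidHom.coe_toHomUnits, MonoidHom.coe_toHomUnits,
      of_apply, of_apply, star_single]

end MonoidAlgebra

/-- **Corollary 2.2**: `V_*(KG)` is normal in `V(KG)` iff all elements of the form `xx*`
with `x ∈ V(KG)` are central in `KG`. -/
theorem Vstar_normal_iff_central (K : Type*) [CommRing K] (G : Type*) [Group G] :
    ((Vstar K G).subgroupOf (V K G)).Normal ↔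
      ∀ x ∈ V K G, ∀ a : MonoidAlgebra K G,
        ((x : MonoidAlgebra K G) * gstar K G x) * a =
          a * ((x : MonoidAlgebra K G) * gstar K G x) := by
  rw [Subgroup.subgroupOf_normal_iff_commute_star_mul_self mem_Vstar_iff]
  simp only [gstar_eq_star, ← Units.coe_star, ← Units.val_mul, ← commute_iff_eq]
  constructor
  · intro h x hx
    have hcentral : ∀ a, Commute (↑(star x * x) : MonoidAlgebra K G) a :=
      commute_of_forall_commute_of fun g => (h x hx _ (toHomUnits_of_mem_Vstar g)).units_val
    have hx_star : x * star x = star x * x :=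
      calc x * star x = x * (star x * x) * x⁻¹ := by group
        _ = star x * x := (Commute.units_val_iff.1 (hcentral x)).symm.mul_inv_cancel
    exact hx_star ▸ hcentral
  · intro h x hx u _
    simpa only [star_star, Commute.units_val_iff] using h (star x) (star_mem_V hx) u
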